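/- arXiv:1503.03804 — 6 statements merged into one kernel-verified Lean document; each statement's English description precedes it below -/
import Mathlib

section
/- Let V be an (r+1)-toroidal vertex algebra, σ an automorphism of V with σ^N = 1, and (W, Y_W) a σ-twisted V-module. If u ∈ V^s with 0 ≤ s < N, then Y_W(u;x_0,x) ∈ x_0^{−s/N}·Hom(W, W[[x_1^{±1},…,x_r^{±1}]]((x_0))); equivalently, writing Y_W(u;x_0,x) = Σ_{(m_0,m)∈(1/N)ℤ×ℤ^r} u_{m_0,m} x_0^{−m_0−1} x^{−m}, the operator u_{m_0,m} is zero on W unless m_0 ∈ s/N + ℤ. -/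
open scoped BigOperators

attribute [local instance] Classical.propDecidable

noncomputable section

/-- Generalized binomial coefficient `C(q, i)` for a rational `q`:
`q(q-1)⋯(q-i+1)/i!`. -/
def qchoose (q : ℚ) (i : ℕ) : ℚ := (descPochhammer ℚ i).eval q / (Nat.factorial i : ℚ)

/-- `C(q, i)` as a complex scalar. -/
def binomC (q : ℚ) (i : ℕ) : ℂ := (qchoose q i : ℂ)

/-- `ω_N = exp(2π√-1/N)`, the principal primitive `N`-th root of unity. -/
def rtu (N : ℕ) : ℂ := Complex.exp (2 * Real.pi * Complex.I / (N : ℂ))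

/-- An `(r+1)`-toroidal vertex algebra, encoded through the mode operators
`v_{m₀,m}` of the vertex operator map
`Y(v;x₀,x) = ∑ v_{m₀,m} x₀^{-m₀-1} x^{-m}`.  The axioms are the
coefficient-wise versions of the vacuum, creation and Jacobi identity
axioms. -/
structure ToroidalVA (r : ℕ) (V : Type) [AddCommGroup V] [Module ℂ V] where
  /-- the mode maps `v ↦ v_{m₀,m}` -/
  Y : V →ₗ[ℂ] (ℤ → (Fin r → ℤ) → Module.End ℂ V)
  /-- the vacuum vector `𝟏` -/
  vac : V
  /-- lower truncation: `Y` maps into `E(V,r) = Hom(V, V[[x₁^{±1},…]]((x₀)))` -/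
  trunc : ∀ u v : V, ∃ M : ℤ, ∀ m0 : ℤ, M ≤ m0 → ∀ m : Fin r → ℤ, Y u m0 m v = 0
  /-- `Y(𝟏;x₀,x)v = v` -/
  vac_act : ∀ (v : V) (m0 : ℤ) (m : Fin r → ℤ),
    Y vac m0 m v = if m0 = -1 ∧ m = 0 then v else 0
  /-- `Y(v;x₀,x)𝟏 ∈ V[[x₀,x₁^{±1},…,x_r^{±1}]]` -/
  creation : ∀ (v : V) (m0 : ℤ) (m : Fin r → ℤ), 0 ≤ m0 → Y v m0 m vac = 0
  /-- the Jacobi identity, written out in components -/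
  jacobi : ∀ (u v w : V) (m0 n0 k0 : ℤ) (p q : Fin r → ℤ),
    (∑ᶠ i : ℕ, ((-1 : ℂ) ^ i * binomC (k0 : ℚ) i) •
      (Y u (m0 + k0 - i) p (Y v (n0 + i) (q - p) w)
        - ((-1 : ℂ) ^ (k0 : ℤ)) • Y v (n0 + k0 - i) (q - p) (Y u (m0 + i) p w)))
    = ∑ᶠ i : ℕ, binomC (m0 : ℚ) i • Y (Y u (k0 + i) p v) (m0 + n0 - i) q w

/-- An automorphism of an `(r+1)`-toroidal vertex algebra: a bijective linear
map fixing the vacuum and intertwining all mode operators. -/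
def ToroidalVA.IsAut {r : ℕ} {V : Type} [AddCommGroup V] [Module ℂ V]
    (T : ToroidalVA r V) (σ : Module.End ℂ V) : Prop :=
  Function.Bijective σ ∧ σ T.vac = T.vac ∧
    ∀ (u v : V) (m0 : ℤ) (m : Fin r → ℤ), σ (T.Y u m0 m v) = T.Y (σ u) m0 m (σ v)

/-- A `σ`-twisted module for an `(r+1)`-toroidal vertex algebra `V` (with `σ`
an automorphism of period `N`), encoded through the mode operators
`v_{m₀,m}` (`m₀ ∈ (1/N)ℤ`) of `Y_W(v;x₀,x) = ∑ v_{m₀,m} x₀^{-m₀-1} x^{-m}`.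
The twisted Jacobi identity is recorded in its coefficient-wise form, for
`σ`-eigenvectors `u ∈ V^s` (which is equivalent to the usual formulation by
linearity, since `V = ⊕ V^s`). -/
structure TwistedModule (r N : ℕ) {V : Type} [AddCommGroup V] [Module ℂ V]
    (T : ToroidalVA r V) (σ : Module.End ℂ V)
    (W : Type) [AddCommGroup W] [Module ℂ W] where
  /-- the twisted mode maps `v ↦ v_{m₀,m}` -/
  Yw : V →ₗ[ℂ] (ℚ → (Fin r → ℤ) → Module.End ℂ W)
  /-- modes are supported on `m₀ ∈ (1/N)ℤ` -/
  frac : ∀ (u : V) (m0 : ℚ) (m : Fin r → ℤ),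
    (∀ t : ℤ, m0 ≠ (t : ℚ) / (N : ℚ)) → Yw u m0 m = 0
  /-- lower truncation: `Y_W` maps into `E(W,r;N)` -/
  trunc : ∀ (u : V) (w : W), ∃ M : ℚ, ∀ m0 : ℚ, M ≤ m0 → ∀ m : Fin r → ℤ,
    Yw u m0 m w = 0
  /-- `Y_W(𝟏;x₀,x) = 1_W` -/
  vac_act : ∀ (m0 : ℚ) (m : Fin r → ℤ),
    Yw T.vac m0 m = if m0 = -1 ∧ m = 0 then 1 else 0
  /-- the twisted Jacobi identity in components, for `u ∈ V^s` -/
  jacobi : ∀ (u : V) (s : ℕ), s < N → σ u = (rtu N) ^ s • u →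
    ∀ (v : V) (w : W) (m0 n0 : ℚ) (k0 : ℤ) (p q : Fin r → ℤ),
    (∑ᶠ i : ℕ, ((-1 : ℂ) ^ i * binomC (k0 : ℚ) i) •
      (Yw u (m0 + k0 - i) p (Yw v (n0 + i) (q - p) w)
        - ((-1 : ℂ) ^ (k0 : ℤ)) • Yw v (n0 + k0 - i) (q - p) (Yw u (m0 + i) p w)))
    = if ∃ t : ℤ, m0 = (s : ℚ) / (N : ℚ) + (t : ℚ) then
        ∑ᶠ i : ℕ, binomC m0 i • Yw (T.Y u (k0 + i) p v) (m0 + n0 - i) q w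
      else 0

end

noncomputable section

/-- Let `V` be an `(r+1)`-toroidal vertex algebra, `σ` an
automorphism with `σ^N = 1`, and `(W, Y_W)` a `σ`-twisted `V`-module.  If
`u ∈ V^s` with `0 ≤ s < N`, then
`Y_W(u;x₀,x) ∈ x₀^{-s/N}·Hom(W, W[[x₁^{±1},…,x_r^{±1}]]((x₀)))`; i.e. the
mode `u_{m₀,m}` vanishes on `W` unless `m₀ ∈ s/N + ℤ`. -/
theorem twisted_mode_homogeneous_support
    {r N : ℕ} (hr : 0 < r) (hN : 0 < N)
    {V : Type} [AddCommGroup V] [Module ℂ V]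
    (T : ToroidalVA r V) (σ : Module.End ℂ V)
    (haut : T.IsAut σ) (hper : σ ^ N = 1)
    {W : Type} [AddCommGroup W] [Module ℂ W]
    (M : TwistedModule r N T σ W)
    (u : V) (s : ℕ) (hs : s < N) (hu : σ u = (rtu N) ^ s • u)
    (m0 : ℚ) (m : Fin r → ℤ)
    (hm0 : ¬ ∃ t : ℤ, m0 = (s : ℚ) / (N : ℚ) + (t : ℚ)) :
    M.Yw u m0 m = 0 := by
  ext w
  have hvac : ∀ (a : ℚ) (b : Fin r → ℤ) (x : W),
      M.Yw T.vac a b x = if a = -1 ∧ b = 0 then x else 0 := by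
    intro a b x
    rw [M.vac_act]
    split <;> simp
  have hj := M.jacobi u s hs hu T.vac w (m0 + 1) (-1) (-1) m m
  rw [if_neg (by
    rintro ⟨t, ht⟩
    exact hm0 ⟨t - 1, by push_cast at ht ⊢; linarith⟩)] at hj
  rw [finsum_eq_single _ 0 (by
    intro i hi
    rw [hvac, hvac, if_neg, if_neg]
    · simp
    · rintro ⟨h1, -⟩
      have : ((-1 : ℤ) : ℚ) + ((-1 : ℤ) : ℚ) - (i : ℚ) = -1 := h1
      have h2 : (i : ℚ) = -1 := by push_cast at this; linarith
      have h3 : (0 : ℚ) ≤ (i : ℚ) := Nat.cast_nonneg i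
      linarith
    · rintro ⟨h1, -⟩
      have : (-1 : ℚ) + (i : ℚ) = -1 := h1
      have hi0 : (i : ℚ) = 0 := by linarith
      exact hi (by exact_mod_cast hi0))] at hj
  rw [hvac, hvac, if_pos ⟨by norm_num, by simp⟩, if_neg (by
    rintro ⟨h1, -⟩
    norm_num at h1)] at hj
  have hb : binomC ((-1 : ℤ) : ℚ) 0 = 1 := by
    simp [binomC, qchoose]
  rw [hb] at hj
  have hmm : m0 + 1 + ((-1 : ℤ) : ℚ) - ((0 : ℕ) : ℚ) = m0 := by push_cast; ring
  rw [hmm] at hj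
  simpa using hj

end
end

section
/- Let V be an (r+1)-toroidal vertex algebra, σ an automorphism of V with σ^N = 1, and (W, Y_W) a σ-twisted V-module. For u ∈ V^s (0 ≤ s < N) and v ∈ V, the twisted commutator formula holds: [Y_W(u;x_0,zy), Y_W(v;y_0,y)] = Σ_{j≥0} (1/j!)(∂/∂y_0)^j (x_0^{−1}δ(y_0/x_0)(y_0/x_0)^{s/N}) · Y_W(Y(u;j,z)v;y_0,y), where Y(u;j,z) := Res_{z_0} z_0^j Y(u;z_0,z) and the sum is finite since Y(u;j,z)v = 0 for j sufficiently large. -/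
open scoped BigOperators

attribute [local instance] Classical.propDecidable

noncomputable section

/-- (Twisted commutator formula.)  For `u ∈ V^s` (`0 ≤ s < N`)
and `v ∈ V`,
`[Y_W(u;x₀,zy), Y_W(v;y₀,y)] = ∑_{j≥0} (1/j!)(∂/∂y₀)^j
  (x₀^{-1}δ(y₀/x₀)(y₀/x₀)^{s/N}) · Y_W(Y(u;j,z)v;y₀,y)`,
written out in coefficients: extracting the coefficient of
`x₀^{-m₀-1} y₀^{-n₀-1} z^{-p} y^{-q}` gives the identity below (the right-hand
side vanishes unless `m₀ ∈ s/N + ℤ`, and the sum over `j` is finite since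
`Y(u;j,z)v = 0` for `j` sufficiently large). -/
theorem twisted_commutator_formula
    {r N : ℕ} (hr : 0 < r) (hN : 0 < N)
    {V : Type} [AddCommGroup V] [Module ℂ V]
    (T : ToroidalVA r V) (σ : Module.End ℂ V)
    (haut : T.IsAut σ) (hper : σ ^ N = 1)
    {W : Type} [AddCommGroup W] [Module ℂ W]
    (M : TwistedModule r N T σ W)
    (u : V) (s : ℕ) (hs : s < N) (hu : σ u = (rtu N) ^ s • u) (v : V) :
    ∀ (m0 n0 : ℚ) (p q : Fin r → ℤ),
      M.Yw u m0 p * M.Yw v n0 (q - p) - M.Yw v n0 (q - p) * M.Yw u m0 p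
        = if ∃ t : ℤ, m0 = (s : ℚ) / (N : ℚ) + (t : ℚ) then
            ∑ᶠ j : ℕ, binomC m0 j • M.Yw (T.Y u (j : ℤ) p v) (m0 + n0 - j) q
          else 0 := by
  classical
  intro m0 n0 p q
  have hb0 : ∀ q : ℚ, binomC q 0 = 1 := by
    intro q; simp [binomC, qchoose]
  have hbz : ∀ i : ℕ, i ≠ 0 → binomC ((0:ℤ) : ℚ) i = 0 := by
    intro i hi
    have hz := descPochhammer_ne_zero_eval_zero (R := ℚ) hi
    simp [binomC, qchoose, hz]
  apply LinearMap.ext; intro w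
  have J := M.jacobi u s hs hu v w m0 n0 0 p q
  -- simplify LHS of J to a single term
  have hL : (∑ᶠ i : ℕ, ((-1 : ℂ) ^ i * binomC ((0:ℤ) : ℚ) i) •
      (M.Yw u (m0 + (0:ℤ) - i) p (M.Yw v (n0 + i) (q - p) w)
        - ((-1 : ℂ) ^ ((0:ℤ) : ℤ)) • M.Yw v (n0 + (0:ℤ) - i) (q - p) (M.Yw u (m0 + i) p w)))
      = M.Yw u m0 p (M.Yw v n0 (q - p) w) - M.Yw v n0 (q - p) (M.Yw u m0 p w) := by
    rw [finsum_eq_single _ 0 (by intro i hi; rw [hbz i hi]; simp)]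
    simp [hb0]
  rw [hL] at J
  by_cases hcond : ∃ t : ℤ, m0 = (s : ℚ) / (N : ℚ) + (t : ℚ)
  · rw [if_pos hcond] at J ⊢
    -- finite support of the operator-valued family
    obtain ⟨Mb, hMb⟩ := T.trunc u v
    have hfin : (Function.support fun j : ℕ =>
        binomC m0 j • M.Yw (T.Y u (j : ℤ) p v) (m0 + n0 - j) q).Finite := by
      apply Set.Finite.subset (Set.finite_Iio Mb.toNat)
      intro j hj
      by_contra hjlt
      apply hj
      have hle : Mb ≤ (j : ℤ) := Int.toNat_le.mp (Nat.le_of_not_lt hjlt)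
      have hz : (T.Y u (j : ℤ) p) v = 0 := hMb (j : ℤ) hle p
      simp [hz]
    have happ := AddMonoidHom.map_finsum
      (LinearMap.toAddMonoidHom
        ((LinearMap.applyₗ : W →ₗ[ℂ] Module.End ℂ W →ₗ[ℂ] W) w)) hfin
    simp only [LinearMap.toAddMonoidHom_coe] at happ
    have happ' : (∑ᶠ j : ℕ, binomC m0 j • M.Yw (T.Y u (j : ℤ) p v) (m0 + n0 - j) q) w
        = ∑ᶠ j : ℕ, (binomC m0 j • M.Yw (T.Y u (j : ℤ) p v) (m0 + n0 - j) q) w := happ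
    simp only [LinearMap.sub_apply, Module.End.mul_apply]
    rw [happ', J]
    apply finsum_congr
    intro i
    norm_num
  · rw [if_neg hcond] at J ⊢
    simpa using J

end
end

section
/- Let V be an (r+1)-toroidal vertex algebra, σ an automorphism of V with σ^N = 1, and (W, Y_W) a σ-twisted V-module. For u ∈ V^s (0 ≤ s < N) and v ∈ V, the twisted iterate formula holds: Y_W(Y(u;z_0,z)v;y_0,y) = Res_{x_0} ((x_0−z_0)/y_0)^{s/N}·X, and also Y_W(Y(u;z_0,z)v;y_0,y) = Res_{x_0} ((y_0+z_0)/x_0)^{−s/N}·X, where X = z_0^{−1}δ((x_0−y_0)/z_0)Y_W(u;x_0,zy)Y_W(v;y_0,y) − z_0^{−1}δ((y_0−x_0)/(−z_0))Y_W(v;y_0,y)Y_W(u;x_0,zy). -/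
open scoped BigOperators

attribute [local instance] Classical.propDecidable

/-!
Each inner sum over `l` is a component of the twisted Jacobi identity, taken at
`m₀ = s/N - i` (first formula) or at `n₀ = β - s/N - i` (second formula). Its right-hand side
is `∑ⱼ C(m₀, j) A(i + j)`, where `A n` is the coefficient of the iterate with both indices
shifted by `n`; lower truncation in `V` makes `A` vanish for large `n`. Regrouping by
`n = i + j` turns the outer sum into `∑ₙ (∑_{i+j=n} cᵢ dᵢⱼ) A n`, and both convolutions that
occur, `∑_{i+j=n} (-1)^i C(q,i) C(q-i,j)` (trinomial revision) and `∑_{i+j=n} C(-q,i) C(q,j)`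
(Chu–Vandermonde), equal `δ_{n,0}`; only `A 0` survives.
-/

open Finset

namespace Ring

theorem sum_antidiagonal_neg_one_pow_mul_choose_mul_choose_sub {R : Type*} [Ring R]
    [BinomialRing R] (r : R) (n : ℕ) :
    ∑ x ∈ antidiagonal n, (-1) ^ x.1 * choose r x.1 * choose (r - x.1) x.2
      = if n = 0 then 1 else 0 := by
  have hterm : ∀ k ∈ range (n + 1), (-1) ^ k * choose r k * choose (r - k) (n - k)
      = (((-1) ^ k * n.choose k : ℤ) : R) * choose r n := by
    intro k hk
    rw [mul_assoc, ← choose_smul_choose r (Nat.le_of_lt_succ (mem_range.mp hk))]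
    push_cast
    rw [nsmul_eq_mul, mul_assoc]
  rw [Nat.sum_antidiagonal_eq_sum_range_succ (fun i j => (-1) ^ i * choose r i * choose (r - i) j),
    sum_congr rfl hterm, ← sum_mul, ← Int.cast_sum, Int.alternating_sum_range_choose]
  split_ifs with hn
  · simp [hn]
  · simp

theorem sum_antidiagonal_choose_neg_mul_choose {R : Type*} [Ring R] [BinomialRing R]
    (r : R) (n : ℕ) :
    ∑ x ∈ antidiagonal n, choose (-r) x.1 * choose r x.2 = if n = 0 then 1 else 0 := by
  rw [← add_choose_eq n (Commute.neg_left (Commute.refl r)), neg_add_cancel, choose_zero_ite]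

end Ring

theorem qchoose_eq_choose (q : ℚ) (i : ℕ) : qchoose q i = Ring.choose q i := by
  rw [Ring.choose_eq_smul, qchoose, ← descPochhammer_map (algebraMap ℤ ℚ),
    Polynomial.eval_map_algebraMap, Polynomial.aeval_eq_smeval, smul_eq_mul, div_eq_inv_mul]

theorem binomC_eq_choose (q : ℚ) (i : ℕ) : binomC q i = Ring.choose (q : ℂ) i := by
  rw [binomC, qchoose_eq_choose]
  exact Ring.map_choose (Rat.castHom ℂ) q i

theorem sum_antidiagonal_neg_one_pow_mul_binomC_mul_binomC_sub (q : ℚ) (n : ℕ) :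
    ∑ x ∈ antidiagonal n, (-1) ^ x.1 * binomC q x.1 * binomC (q - x.1) x.2
      = if n = 0 then 1 else 0 := by
  simpa [binomC_eq_choose] using
    Ring.sum_antidiagonal_neg_one_pow_mul_choose_mul_choose_sub (q : ℂ) n

theorem sum_antidiagonal_binomC_neg_mul_binomC (q : ℚ) (n : ℕ) :
    ∑ x ∈ antidiagonal n, binomC (-q) x.1 * binomC q x.2 = if n = 0 then 1 else 0 := by
  simpa [binomC_eq_choose] using Ring.sum_antidiagonal_choose_neg_mul_choose (q : ℂ) n

theorem finsum_eq_sum_range_of_forall_le {M : Type*} [AddCommMonoid M] {f : ℕ → M} {n : ℕ}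
    (hf : ∀ m, n ≤ m → f m = 0) : ∑ᶠ m, f m = ∑ m ∈ range n, f m :=
  finsum_eq_finsetSum_of_support_subset f fun m hm => by
    simpa using lt_of_not_ge fun h => hm (hf m h)

theorem finsum_smul_finsum_add_eq_of_antidiagonal {R M : Type*} [Semiring R] [AddCommMonoid M]
    [Module R M] (c : ℕ → R) (d : ℕ → ℕ → R) {A : ℕ → M} {n₀ : ℕ}
    (hA : ∀ n, n₀ ≤ n → A n = 0)
    (hcd : ∀ n, ∑ x ∈ antidiagonal n, c x.1 * d x.1 x.2 = if n = 0 then 1 else 0) :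
    ∑ᶠ i, c i • ∑ᶠ j, d i j • A (i + j) = A 0 := by
  have hA' : ∀ n, n₀ + 1 ≤ n → A n = 0 := fun n hn => hA n (by omega)
  have hinner : ∀ i, ∑ᶠ j, d i j • A (i + j) = ∑ j ∈ range (n₀ + 1 - i), d i j • A (i + j) :=
    fun i => finsum_eq_sum_range_of_forall_le fun j hj => by rw [hA' _ (by omega), smul_zero]
  calc ∑ᶠ i, c i • ∑ᶠ j, d i j • A (i + j)
      = ∑ i ∈ range (n₀ + 1), ∑ j ∈ range (n₀ + 1 - i), (c i * d i j) • A (i + j) := by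
        simp_rw [hinner, mul_smul, ← smul_sum]
        exact finsum_eq_sum_range_of_forall_le fun i hi => by simp [Nat.sub_eq_zero_of_le hi]
    _ = ∑ n ∈ range (n₀ + 1), (∑ x ∈ antidiagonal n, c x.1 * d x.1 x.2) • A n := by
        rw [← sum_range_diag_flip]
        refine sum_congr rfl fun n _ => ?_
        rw [Nat.sum_antidiagonal_eq_sum_range_succ (fun i j => c i * d i j), sum_smul]
        refine sum_congr rfl fun i hi => ?_
        rw [Nat.add_sub_cancel' (Nat.le_of_lt_succ (mem_range.mp hi))]
    _ = A 0 := by simp [hcd]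

namespace TwistedModule

variable {r N : ℕ} {V : Type} [AddCommGroup V] [Module ℂ V] {T : ToroidalVA r V}
  {σ : Module.End ℂ V} {W : Type} [AddCommGroup W] [Module ℂ W] (M : TwistedModule r N T σ W)

theorem exists_Yw_Y_add_eq_zero (u v : V) (k : ℤ) (β : ℚ) (p q : Fin r → ℤ) (w : W) :
    ∃ n₀ : ℕ, ∀ n, n₀ ≤ n → M.Yw (T.Y u (k + n) p v) (β - n) q w = 0 := by
  obtain ⟨m₀, hm₀⟩ := T.trunc u v
  refine ⟨(m₀ - k).toNat, fun n hn => ?_⟩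
  simp [hm₀ (k + n) (by omega) p]

theorem jacobi_sub_nat_left {u : V} {s : ℕ} (hs : s < N) (hu : σ u = (rtu N) ^ s • u)
    (v : V) (k : ℤ) (β : ℚ) (p q : Fin r → ℤ) (w : W) (i : ℕ) :
    ∑ᶠ l : ℕ, ((-1 : ℂ) ^ l * binomC ((k : ℚ) + (i : ℚ)) l) •
      (M.Yw u ((s : ℚ) / (N : ℚ) + (k : ℚ) - l) p
          (M.Yw v (β - (s : ℚ) / (N : ℚ) + l) (q - p) w)
        - ((-1 : ℂ) ^ (k + (i : ℤ))) •
          M.Yw v (β - (s : ℚ) / (N : ℚ) + (k : ℚ) + i - l) (q - p)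
            (M.Yw u ((s : ℚ) / (N : ℚ) - i + l) p w))
      = ∑ᶠ j : ℕ, binomC ((s : ℚ) / (N : ℚ) - i) j •
          M.Yw (T.Y u (k + ↑(i + j)) p v) (β - ↑(i + j)) q w := by
  have h := M.jacobi u s hs hu v w ((s : ℚ) / N - i) (β - (s : ℚ) / N) (k + i) p q
  rw [if_pos ⟨-i, by push_cast; ring⟩] at h
  convert h using 6 <;> push_cast <;> ring_nf

theorem jacobi_sub_nat_right {u : V} {s : ℕ} (hs : s < N) (hu : σ u = (rtu N) ^ s • u)
    (v : V) (k : ℤ) (β : ℚ) (p q : Fin r → ℤ) (w : W) (i : ℕ) :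
    ∑ᶠ l : ℕ, ((-1 : ℂ) ^ l * binomC ((k : ℚ) + (i : ℚ)) l) •
      (M.Yw u ((s : ℚ) / (N : ℚ) + (k : ℚ) + i - l) p
          (M.Yw v (β - (s : ℚ) / (N : ℚ) - i + l) (q - p) w)
        - ((-1 : ℂ) ^ (k + (i : ℤ))) •
          M.Yw v (β - (s : ℚ) / (N : ℚ) + (k : ℚ) - l) (q - p)
            (M.Yw u ((s : ℚ) / (N : ℚ) + l) p w))
      = ∑ᶠ j : ℕ, binomC ((s : ℚ) / (N : ℚ)) j •
          M.Yw (T.Y u (k + ↑(i + j)) p v) (β - ↑(i + j)) q w := by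
  have h := M.jacobi u s hs hu v w ((s : ℚ) / N) (β - (s : ℚ) / N - i) (k + i) p q
  rw [if_pos ⟨0, by simp⟩] at h
  convert h using 6 <;> push_cast <;> ring_nf

end TwistedModule

/-- Both sides are written out in coefficients (the coefficient of
`z₀^{-k-1} y₀^{-β-1} z^{-p} y^{-q}`, applied to `w ∈ W`): the coefficient of
`x₀^{-m-1} y₀^{-n-1} z₀^{-k'-1} z^{-p} y^{-q}` of `X` is the inner sum over
`l`, and the residue `Res_{x₀}` together with the expansion of the extra
binomial factor yields the outer sum over `i`. -/
theorem twisted_iterate_formula_general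
    {r N : ℕ}
    {V : Type} [AddCommGroup V] [Module ℂ V]
    (T : ToroidalVA r V) (σ : Module.End ℂ V)
    {W : Type} [AddCommGroup W] [Module ℂ W]
    (M : TwistedModule r N T σ W)
    (u : V) (s : ℕ) (hs : s < N) (hu : σ u = (rtu N) ^ s • u) (v : V) :
    ∀ (k : ℤ) (β : ℚ) (p q : Fin r → ℤ) (w : W),
      (M.Yw (T.Y u k p v) β q w
        = ∑ᶠ i : ℕ, ((-1 : ℂ) ^ i * binomC ((s : ℚ) / (N : ℚ)) i) •
            ∑ᶠ l : ℕ, ((-1 : ℂ) ^ l * binomC ((k : ℚ) + (i : ℚ)) l) •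
              (M.Yw u ((s : ℚ) / (N : ℚ) + (k : ℚ) - l) p
                  (M.Yw v (β - (s : ℚ) / (N : ℚ) + l) (q - p) w)
                - ((-1 : ℂ) ^ (k + (i : ℤ))) •
                  M.Yw v (β - (s : ℚ) / (N : ℚ) + (k : ℚ) + i - l) (q - p)
                    (M.Yw u ((s : ℚ) / (N : ℚ) - i + l) p w)))
      ∧
      (M.Yw (T.Y u k p v) β q w
        = ∑ᶠ i : ℕ, binomC (-(s : ℚ) / (N : ℚ)) i •
            ∑ᶠ l : ℕ, ((-1 : ℂ) ^ l * binomC ((k : ℚ) + (i : ℚ)) l) •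
              (M.Yw u ((s : ℚ) / (N : ℚ) + (k : ℚ) + i - l) p
                  (M.Yw v (β - (s : ℚ) / (N : ℚ) - i + l) (q - p) w)
                - ((-1 : ℂ) ^ (k + (i : ℤ))) •
                  M.Yw v (β - (s : ℚ) / (N : ℚ) + (k : ℚ) - l) (q - p)
                    (M.Yw u ((s : ℚ) / (N : ℚ) + l) p w))) := by
  intro k β p q w
  obtain ⟨n₀, hn₀⟩ := M.exists_Yw_Y_add_eq_zero u v k β p q w
  constructor
  · simp_rw [M.jacobi_sub_nat_left hs hu]
    rw [finsum_smul_finsum_add_eq_of_antidiagonal _ _ hn₀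
      (sum_antidiagonal_neg_one_pow_mul_binomC_mul_binomC_sub _)]
    simp
  · simp_rw [M.jacobi_sub_nat_right hs hu, neg_div]
    rw [finsum_smul_finsum_add_eq_of_antidiagonal _ _ hn₀
      (sum_antidiagonal_binomC_neg_mul_binomC _)]
    simp

/-- (Twisted iterate formula.)  For `u ∈ V^s` (`0 ≤ s < N`)
and `v ∈ V`,
`Y_W(Y(u;z₀,z)v;y₀,y) = Res_{x₀} ((x₀-z₀)/y₀)^{s/N}·X`
and
`Y_W(Y(u;z₀,z)v;y₀,y) = Res_{x₀} ((y₀+z₀)/x₀)^{-s/N}·X`,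
where
`X = z₀^{-1}δ((x₀-y₀)/z₀)Y_W(u;x₀,zy)Y_W(v;y₀,y)
   - z₀^{-1}δ((y₀-x₀)/(-z₀))Y_W(v;y₀,y)Y_W(u;x₀,zy)`.
Below both sides are written out in coefficients (the coefficient of
`z₀^{-k-1} y₀^{-β-1} z^{-p} y^{-q}`, applied to `w ∈ W`): the coefficient of
`x₀^{-m-1} y₀^{-n-1} z₀^{-k'-1} z^{-p} y^{-q}` of `X` is the inner sum over
`l`, and the residue `Res_{x₀}` together with the expansion of the extra
binomial factor yields the outer sum over `i`. -/
theorem twisted_iterate_formula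
    {r N : ℕ} (hr : 0 < r) (hN : 0 < N)
    {V : Type} [AddCommGroup V] [Module ℂ V]
    (T : ToroidalVA r V) (σ : Module.End ℂ V)
    (haut : T.IsAut σ) (hper : σ ^ N = 1)
    {W : Type} [AddCommGroup W] [Module ℂ W]
    (M : TwistedModule r N T σ W)
    (u : V) (s : ℕ) (hs : s < N) (hu : σ u = (rtu N) ^ s • u) (v : V) :
    ∀ (k : ℤ) (β : ℚ) (p q : Fin r → ℤ) (w : W),
      (M.Yw (T.Y u k p v) β q w
        = ∑ᶠ i : ℕ, ((-1 : ℂ) ^ i * binomC ((s : ℚ) / (N : ℚ)) i) •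
            ∑ᶠ l : ℕ, ((-1 : ℂ) ^ l * binomC ((k : ℚ) + (i : ℚ)) l) •
              (M.Yw u ((s : ℚ) / (N : ℚ) + (k : ℚ) - l) p
                  (M.Yw v (β - (s : ℚ) / (N : ℚ) + l) (q - p) w)
                - ((-1 : ℂ) ^ (k + (i : ℤ))) •
                  M.Yw v (β - (s : ℚ) / (N : ℚ) + (k : ℚ) + i - l) (q - p)
                    (M.Yw u ((s : ℚ) / (N : ℚ) - i + l) p w)))
      ∧
      (M.Yw (T.Y u k p v) β q w
        = ∑ᶠ i : ℕ, binomC (-(s : ℚ) / (N : ℚ)) i •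
            ∑ᶠ l : ℕ, ((-1 : ℂ) ^ l * binomC ((k : ℚ) + (i : ℚ)) l) •
              (M.Yw u ((s : ℚ) / (N : ℚ) + (k : ℚ) + i - l) p
                  (M.Yw v (β - (s : ℚ) / (N : ℚ) - i + l) (q - p) w)
                - ((-1 : ℂ) ^ (k + (i : ℤ))) •
                  M.Yw v (β - (s : ℚ) / (N : ℚ) + (k : ℚ) - l) (q - p)
                    (M.Yw u ((s : ℚ) / (N : ℚ) + l) p w))) :=
  twisted_iterate_formula_general T σ M u s hs hu v
end

section
/- (Weak commutativity) Let V be an (r+1)-toroidal vertex algebra, σ an automorphism of V with σ^N = 1, and (W, Y_W) a σ-twisted V-module. Then for any u, v ∈ V there exists a nonnegative integer k such that (x_0−y_0)^k [Y_W(u;x_0,x), Y_W(v;y_0,y)] = 0. -/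
open scoped BigOperators

attribute [local instance] Classical.propDecidable

/-! Write `u = ∑ₛ uₛ` with `σ uₛ = ω_N^s uₛ`, using the projections `uₛ = N⁻¹ ∑ⱼ ω_N^{-sj} σʲ u`
(here `σᴺ = 1` is what makes them eigenvectors). For an eigenvector `uₛ` and `k` at least the
truncation order of `Y(uₛ;z₀,z)v`, the twisted Jacobi identity with `k₀ = k` has vanishing right
side, since it only involves the modes `(uₛ)_{k+i} v = 0`; for even `k` the sign `(-1)^k` in front
of the second product disappears and its left side is exactly the coefficient of
`(x₀-y₀)^k [Y_W(uₛ;x₀,x), Y_W(v;y₀,y)]`. -/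

theorem qchoose_natCast (k i : ℕ) : qchoose k i = k.choose i := by
  rw [qchoose, descPochhammer_eval_eq_descFactorial, Nat.descFactorial_eq_factorial_mul_choose,
    Nat.cast_mul, mul_div_cancel_left₀ _ (by positivity)]

theorem binomC_natCast (k i : ℕ) : binomC k i = k.choose i := by
  rw [binomC, qchoose_natCast, Rat.cast_natCast]

theorem finsum_mul_choose_smul {R A : Type*} [Semiring R] [AddCommMonoid A] [Module R A]
    (k : ℕ) (c : ℕ → R) (g : ℕ → A) :
    ∑ᶠ i, (c i * k.choose i) • g i = ∑ i ∈ Finset.range (k + 1), (c i * k.choose i) • g i := by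
  refine finsum_eq_sum_of_support_subset _ fun i hi => ?_
  by_contra hik
  simp_all [Nat.choose_eq_zero_of_lt (by simpa using hik : k < i)]

theorem IsPrimitiveRoot.geom_sum_pow_eq_zero {K : Type*} [CommRing K] [IsDomain K] {ζ : K}
    {N j : ℕ} (hζ : IsPrimitiveRoot ζ N) (hj0 : j ≠ 0) (hjN : j < N) :
    ∑ s ∈ Finset.range N, (ζ ^ j) ^ s = 0 := by
  refine eq_zero_of_ne_zero_of_mul_left_eq_zero
    (sub_ne_zero.2 (hζ.pow_ne_one_of_pos_of_lt hj0 hjN).symm) ?_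
  rw [mul_neg_geom_sum, ← pow_mul, mul_comm, pow_mul, hζ.pow_eq_one, one_pow, sub_self]

namespace Module.End

variable {K V : Type*} [Field K] [AddCommGroup V] [Module K V]

def eigenProj (ζ : K) (N : ℕ) (σ : Module.End K V) (s : ℕ) : Module.End K V :=
  (N : K)⁻¹ • ∑ j ∈ Finset.range N, ((ζ ^ s)⁻¹) ^ j • σ ^ j

theorem mul_eigenProj {ζ : K} {N : ℕ} (hζ : ζ ^ N = 1) {σ : Module.End K V} (hσ : σ ^ N = 1)
    (s : ℕ) : σ * eigenProj ζ N σ s = ζ ^ s • eigenProj ζ N σ s := by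
  rcases N.eq_zero_or_pos with rfl | hN
  · simp [eigenProj]
  have hζs : ζ ^ s ≠ 0 := pow_ne_zero _ (by rintro rfl; simp [hN.ne'] at hζ)
  let f : ℕ → Module.End K V := fun j => ((ζ ^ s)⁻¹) ^ j • σ ^ j
  have hshift (j : ℕ) : σ * f j = ζ ^ s • f (j + 1) := by
    rw [mul_smul_comm, smul_smul, pow_succ' (ζ ^ s)⁻¹, ← mul_assoc, mul_inv_cancel₀ hζs, one_mul,
      pow_succ' σ]
  have hperiod : f N = f 0 := by
    have hζsN : (ζ ^ s) ^ N = 1 := by rw [← pow_mul, mul_comm, pow_mul, hζ, one_pow]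
    simp only [f, inv_pow, hζsN, hσ, inv_one, pow_zero]
  have hrotate : ∑ j ∈ Finset.range N, f (j + 1) = ∑ j ∈ Finset.range N, f j := by
    have h := (Finset.sum_range_succ' f N).symm.trans (Finset.sum_range_succ f N)
    rw [hperiod] at h
    exact add_right_cancel h
  calc σ * eigenProj ζ N σ s = (N : K)⁻¹ • ∑ j ∈ Finset.range N, σ * f j := by
        rw [eigenProj, mul_smul_comm, Finset.mul_sum]
    _ = (N : K)⁻¹ • ζ ^ s • ∑ j ∈ Finset.range N, f (j + 1) := by
        simp only [hshift, Finset.smul_sum]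
    _ = ζ ^ s • eigenProj ζ N σ s := by
        rw [hrotate, smul_comm]
        rfl

theorem sum_eigenProj {ζ : K} {N : ℕ} (hζ : IsPrimitiveRoot ζ N) (hN : N ≠ 0)
    (σ : Module.End K V) : ∑ s ∈ Finset.range N, eigenProj ζ N σ s = 1 := by
  have : NeZero N := ⟨hN⟩
  have hNK : (N : K) ≠ 0 := hζ.neZero'.out
  have horth (j : ℕ) (hj : j ∈ Finset.range N) :
      ∑ s ∈ Finset.range N, ((ζ ^ s)⁻¹) ^ j = if j = 0 then (N : K) else 0 := by
    split_ifs with hj0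
    · simp [hj0]
    · have hswap (s : ℕ) : ((ζ ^ s)⁻¹) ^ j = (ζ⁻¹ ^ j) ^ s := by
        rw [inv_pow, inv_pow, inv_pow, ← pow_mul, ← pow_mul, mul_comm]
      simp only [hswap]
      exact hζ.inv.geom_sum_pow_eq_zero hj0 (Finset.mem_range.1 hj)
  simp only [eigenProj, ← Finset.smul_sum]
  rw [Finset.sum_comm]
  simp only [← Finset.sum_smul]
  rw [Finset.sum_congr rfl fun j hj => by rw [horth j hj]]
  simp only [ite_smul, zero_smul, Finset.sum_ite_eq', Finset.mem_range.2 (Nat.pos_of_ne_zero hN),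
    if_true, pow_zero, smul_smul, inv_mul_cancel₀ hNK, one_smul]

end Module.End

theorem ToroidalVA.exists_trunc_finset {r : ℕ} {V : Type} [AddCommGroup V] [Module ℂ V]
    (T : ToroidalVA r V) {ι : Type*} (I : Finset ι) (u : ι → V) (v : V) :
    ∃ K : ℕ, ∀ i ∈ I, ∀ n : ℤ, K ≤ n → ∀ p, T.Y (u i) n p v = 0 := by
  choose K hK using fun i => T.trunc (u i) v
  refine ⟨I.sup fun i => (K i).toNat, fun i hi n hn p => hK i n ?_ p⟩
  have := Finset.le_sup (f := fun i => (K i).toNat) hi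
  omega

namespace TwistedModule

variable {r N : ℕ} {V : Type} [AddCommGroup V] [Module ℂ V] {T : ToroidalVA r V}
  {σ : Module.End ℂ V} {W : Type} [AddCommGroup W] [Module ℂ W] (M : TwistedModule r N T σ W)

/-- The coefficient of `x₀^{-m₀-1} y₀^{-n₀-1} x^{-p} y^{-q}` in
`(x₀-y₀)^k [Y_W(u;x₀,x), Y_W(v;y₀,y)]`. -/
def weakCommCoeff (k : ℕ) (u v : V) (m0 n0 : ℚ) (p q : Fin r → ℤ) : Module.End ℂ W :=
  ∑ i ∈ Finset.range (k + 1), ((-1 : ℂ) ^ i * (Nat.choose k i : ℂ)) •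
    (M.Yw u (m0 + (k : ℚ) - i) p * M.Yw v (n0 + i) q
      - M.Yw v (n0 + (k : ℚ) - i) q * M.Yw u (m0 + i) p)

theorem weakCommCoeff_sum (k : ℕ) {ι : Type*} (I : Finset ι) (u : ι → V) (v : V) (m0 n0 : ℚ)
    (p q : Fin r → ℤ) :
    M.weakCommCoeff k (∑ i ∈ I, u i) v m0 n0 p q =
      ∑ i ∈ I, M.weakCommCoeff k (u i) v m0 n0 p q := by
  simp only [weakCommCoeff, map_sum, Finset.sum_apply, Finset.sum_mul, Finset.mul_sum,
    ← Finset.sum_sub_distrib, Finset.smul_sum]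
  exact Finset.sum_comm

theorem weakCommCoeff_eq_zero_of_eigenvector {u : V} {s : ℕ} (hs : s < N)
    (hu : σ u = rtu N ^ s • u) (v : V) {k : ℕ} (hk : Even k)
    (hY : ∀ n : ℤ, k ≤ n → ∀ p, T.Y u n p v = 0) (m0 n0 : ℚ) (p q : Fin r → ℤ) :
    M.weakCommCoeff k u v m0 n0 p q = 0 := by
  ext w
  have hJ := M.jacobi u s hs hu v w m0 n0 k p (p + q)
  have hRHS (i : ℕ) : M.Yw (T.Y u (k + i) p v) (m0 + n0 - i) (p + q) w = 0 := by
    simp only [hY (k + i) (by omega), map_zero, Pi.zero_apply, LinearMap.zero_apply]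
  simp only [hRHS, smul_zero, finsum_zero, ite_self, zpow_natCast, hk.neg_one_pow, one_smul,
    Int.cast_natCast, binomC_natCast, add_sub_cancel_left, finsum_mul_choose_smul] at hJ
  simpa only [weakCommCoeff, LinearMap.coe_sum, LinearMap.coe_smul, Finset.sum_apply,
    Pi.smul_apply, LinearMap.sub_apply, Module.End.mul_apply, LinearMap.zero_apply] using hJ

end TwistedModule

theorem twisted_weak_commutativity_general
    {r N : ℕ} (hN : 0 < N)
    {V : Type} [AddCommGroup V] [Module ℂ V]
    (T : ToroidalVA r V) (σ : Module.End ℂ V)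
    (hper : σ ^ N = 1)
    {W : Type} [AddCommGroup W] [Module ℂ W]
    (M : TwistedModule r N T σ W)
    (u v : V) :
    ∃ k : ℕ, ∀ (m0 n0 : ℚ) (p q : Fin r → ℤ),
      ∑ i ∈ Finset.range (k + 1),
        ((-1 : ℂ) ^ i * (Nat.choose k i : ℂ)) •
          (M.Yw u (m0 + (k : ℚ) - i) p * M.Yw v (n0 + i) q
            - M.Yw v (n0 + (k : ℚ) - i) q * M.Yw u (m0 + i) p) = 0 := by
  have hζ : IsPrimitiveRoot (rtu N) N := Complex.isPrimitiveRoot_exp N hN.ne'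
  let us (s : ℕ) : V := Module.End.eigenProj (rtu N) N σ s u
  obtain ⟨K, hK⟩ := T.exists_trunc_finset (Finset.range N) us v
  refine ⟨2 * K, fun m0 n0 p q => ?_⟩
  have hu : ∑ s ∈ Finset.range N, us s = u := by
    rw [← LinearMap.sum_apply, Module.End.sum_eigenProj hζ hN.ne', Module.End.one_apply]
  change M.weakCommCoeff (2 * K) u v m0 n0 p q = 0
  rw [← hu, M.weakCommCoeff_sum]
  refine Finset.sum_eq_zero fun s hs => M.weakCommCoeff_eq_zero_of_eigenvector
    (Finset.mem_range.1 hs) ?_ v (even_two_mul K) (fun n hn => hK s hs n (by omega)) m0 n0 p q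
  exact LinearMap.congr_fun (Module.End.mul_eigenProj hζ.pow_eq_one hper s) u

/-- (Weak commutativity.)  For any `u, v ∈ V` there is a
nonnegative integer `k` with `(x₀-y₀)^k [Y_W(u;x₀,x), Y_W(v;y₀,y)] = 0`,
written out in coefficients: the coefficient of
`x₀^{-m₀-1} y₀^{-n₀-1} x^{-p} y^{-q}` of
`(x₀-y₀)^k [Y_W(u;x₀,x), Y_W(v;y₀,y)]` is the finite sum below. -/
theorem twisted_weak_commutativity
    {r N : ℕ} (hr : 0 < r) (hN : 0 < N)
    {V : Type} [AddCommGroup V] [Module ℂ V]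
    (T : ToroidalVA r V) (σ : Module.End ℂ V)
    (haut : T.IsAut σ) (hper : σ ^ N = 1)
    {W : Type} [AddCommGroup W] [Module ℂ W]
    (M : TwistedModule r N T σ W)
    (u v : V) :
    ∃ k : ℕ, ∀ (m0 n0 : ℚ) (p q : Fin r → ℤ),
      ∑ i ∈ Finset.range (k + 1),
        ((-1 : ℂ) ^ i * (Nat.choose k i : ℂ)) •
          (M.Yw u (m0 + (k : ℚ) - i) p * M.Yw v (n0 + i) q
            - M.Yw v (n0 + (k : ℚ) - i) q * M.Yw u (m0 + i) p) = 0 :=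
  twisted_weak_commutativity_general hN T σ hper M u v
end

section
/- Let V be an (r+1)-toroidal vertex algebra, σ an automorphism of V with σ^N = 1, and (W, Y_W) a faithful σ-twisted V-module (i.e., Y_W(v;x_0,x) = 0 implies v = 0). Let a, b, c^{(0)}, c^{(1)},…, c^{(k)} ∈ V and m ∈ ℤ^r, with a ∈ V^s for some 0 ≤ s < N. If [Y_W(a;x_0,m), Y_W(b;y_0,y)] = y^m Σ_{j=0}^{k} Y_W(c^{(j)};y_0,y) (1/j!)(∂/∂y_0)^j (x_0^{−1}δ(y_0/x_0)(y_0/x_0)^{s/N}) holds on W, then a_{j,m}b = c^{(j)} for 0 ≤ j ≤ k, a_{j,m}b = 0 for j > k, and on V one has [Y(a;x_0,m), Y(b;y_0,y)] = y^m Σ_{j=0}^{k} Y(c^{(j)};y_0,y) (1/j!)(∂/∂y_0)^j (x_0^{−1}δ(y_0/x_0)). Here Y_W(a;x_0,m) (resp. Y(a;x_0,m)) denotes the coefficient of x^{−m} in Y_W(a;x_0,x) (resp. Y(a;x_0,x)). -/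
open scoped BigOperators

attribute [local instance] Classical.propDecidable

noncomputable section


lemma qchoose_zero_right (q : ℚ) : qchoose q 0 = 1 := by simp [qchoose]

lemma qchoose_succ (q : ℚ) (i : ℕ) :
    qchoose (q+1) (i+1) = qchoose q (i+1) + qchoose q i := by
  have h1 : (descPochhammer ℚ (i+1)).eval (q+1) = (q+1) * (descPochhammer ℚ i).eval q := by
    rw [descPochhammer_succ_left]
    simp [Polynomial.eval_comp]
  have h2 : (descPochhammer ℚ (i+1)).eval q = (descPochhammer ℚ i).eval q * (q - i) := by
    rw [descPochhammer_succ_right]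
    simp
  have hfac : (Nat.factorial i : ℚ) ≠ 0 := Nat.cast_ne_zero.2 (Nat.factorial_ne_zero i)
  have hfac1 : ((i:ℚ) + 1) ≠ 0 := by positivity
  rw [qchoose, qchoose, qchoose, h1, h2, Nat.factorial_succ]
  push_cast
  field_simp
  ring

lemma qchoose_zero_left (i : ℕ) (hi : i ≠ 0) : qchoose 0 i = 0 := by
  obtain ⟨j, rfl⟩ := Nat.exists_eq_succ_of_ne_zero hi
  rw [qchoose, descPochhammer_succ_left]
  simp

lemma binomC_zero_right (q : ℚ) : binomC q 0 = 1 := by simp [binomC, qchoose_zero_right]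

lemma binomC_succ (q : ℚ) (i : ℕ) : binomC (q+1) (i+1) = binomC q (i+1) + binomC q i := by
  simp [binomC, qchoose_succ]

lemma binomC_zero_left (i : ℕ) (hi : i ≠ 0) : binomC 0 i = 0 := by
  simp [binomC, qchoose_zero_left i hi]

lemma key_vanish {W : Type} [AddCommGroup W] [Module ℂ W] (x0 : ℚ) :
    ∀ (L : ℕ) (v : ℕ → W),
      (∀ t : ℤ, ∑ i ∈ Finset.range L, binomC (x0 + t) i • v i = 0) →
      ∀ i < L, v i = 0 := by
  intro L
  induction L with
  | zero => intro v _ i hi; exact absurd hi (Nat.not_lt_zero i)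
  | succ L ih =>
    intro v hv
    have hshift : ∀ t : ℤ, ∑ i ∈ Finset.range L, binomC (x0 + t) i • v (i+1) = 0 := by
      intro t
      have h1 := hv (t+1)
      have h2 := hv t
      rw [Finset.sum_range_succ'] at h1 h2
      have hc : x0 + ((t+1 : ℤ) : ℚ) = (x0 + t) + 1 := by push_cast; ring
      rw [hc] at h1
      simp only [binomC_succ, add_smul, Finset.sum_add_distrib, binomC_zero_right] at h1 h2
      have h3 : ∑ i ∈ Finset.range L, binomC (x0 + (t:ℚ)) i • v (i+1)
          = (∑ x ∈ Finset.range L, binomC (x0 + (t:ℚ)) (x + 1) • v (x + 1)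
              + ∑ x ∈ Finset.range L, binomC (x0 + (t:ℚ)) x • v (x + 1) + (1:ℂ) • v 0)
            - (∑ x ∈ Finset.range L, binomC (x0 + (t:ℚ)) (x + 1) • v (x + 1) + (1:ℂ) • v 0) := by
        abel
      rw [h3, h1, h2, sub_zero]
    have htail : ∀ i < L, v (i+1) = 0 := ih (fun i => v (i+1)) hshift
    intro i hi
    rcases Nat.eq_zero_or_pos i with rfl | hpos
    · have h0 := hv 0
      rw [Finset.sum_range_succ'] at h0
      have hz : ∀ j ∈ Finset.range L, binomC (x0 + ((0:ℤ):ℚ)) (j+1) • v (j+1) = 0 := by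
        intro j hj
        rw [htail j (Finset.mem_range.1 hj), smul_zero]
      rw [Finset.sum_eq_zero hz, zero_add] at h0
      simpa [binomC_zero_right] using h0
    · obtain ⟨j, rfl⟩ := Nat.exists_eq_succ_of_ne_zero (Nat.pos_iff_ne_zero.1 hpos)
      exact htail j (Nat.lt_of_succ_lt_succ hi)

/-- Let `(W, Y_W)` be a faithful `σ`-twisted `V`-module, let
`a ∈ V^s`, `b, c⁽⁰⁾, …, c⁽ᵏ⁾ ∈ V` and `m ∈ ℤ^r`.  If
`[Y_W(a;x₀,m), Y_W(b;y₀,y)] = y^m ∑_{j=0}^{k} Y_W(c⁽ʲ⁾;y₀,y)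
  (1/j!)(∂/∂y₀)^j (x₀^{-1}δ(y₀/x₀)(y₀/x₀)^{s/N})`
holds on `W` (written out in coefficients below; the coefficient of
`x₀^{-m₀-1}` of the right-hand side vanishes unless `m₀ ∈ s/N + ℤ`), then
`a_{j,m}b = c⁽ʲ⁾` for `0 ≤ j ≤ k`, `a_{j,m}b = 0` for `j > k`, and on `V`,
`[Y(a;x₀,m), Y(b;y₀,y)] = y^m ∑_{j=0}^{k} Y(c⁽ʲ⁾;y₀,y)
  (1/j!)(∂/∂y₀)^j (x₀^{-1}δ(y₀/x₀))`. -/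
theorem faithful_twisted_module_commutator_transfer
    {r N : ℕ} (hr : 0 < r) (hN : 0 < N)
    {V : Type} [AddCommGroup V] [Module ℂ V]
    (T : ToroidalVA r V) (σ : Module.End ℂ V)
    (haut : T.IsAut σ) (hper : σ ^ N = 1)
    {W : Type} [AddCommGroup W] [Module ℂ W]
    (M : TwistedModule r N T σ W)
    (hfaithful : ∀ v : V, (∀ (m0 : ℚ) (m : Fin r → ℤ), M.Yw v m0 m = 0) → v = 0)
    (a b : V) (k : ℕ) (c : ℕ → V) (m : Fin r → ℤ)
    (s : ℕ) (hs : s < N) (ha : σ a = (rtu N) ^ s • a)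
    (hyp : ∀ (m0 n0 : ℚ) (q : Fin r → ℤ),
      M.Yw a m0 m * M.Yw b n0 q - M.Yw b n0 q * M.Yw a m0 m
        = if ∃ t : ℤ, m0 = (s : ℚ) / (N : ℚ) + (t : ℚ) then
            ∑ j ∈ Finset.range (k + 1),
              binomC m0 j • M.Yw (c j) (m0 + n0 - j) (q + m)
          else 0) :
    (∀ j : ℕ, j ≤ k → T.Y a (j : ℤ) m b = c j) ∧
    (∀ j : ℕ, k < j → T.Y a (j : ℤ) m b = 0) ∧
    (∀ (m0 n0 : ℤ) (q : Fin r → ℤ),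
      T.Y a m0 m * T.Y b n0 q - T.Y b n0 q * T.Y a m0 m
        = ∑ j ∈ Finset.range (k + 1),
            binomC (m0 : ℚ) j • T.Y (c j) (m0 + n0 - j) (q + m)) := by
  classical
  obtain ⟨M0, hM0⟩ := T.trunc a b
  set cc : ℕ → V := fun i => if i ≤ k then c i else 0 with hcc
  set e : ℕ → V := fun i => T.Y a (i:ℤ) m b - cc i with he
  set L : ℕ := max (k+1) M0.toNat with hL
  have hkL : k + 1 ≤ L := le_max_left _ _
  have hccz : ∀ i, k < i → cc i = 0 := by
    intro i hi
    simp [hcc, Nat.not_le.2 hi]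
  have hYz : ∀ i : ℕ, L ≤ i → T.Y a (i:ℤ) m b = 0 := by
    intro i hi
    have hMi : M0 ≤ (i:ℤ) := by
      have h1 : M0.toNat ≤ i := le_trans (le_max_right _ _) hi
      have h2 : (M0.toNat : ℤ) ≤ (i:ℤ) := by exact_mod_cast h1
      exact le_trans (Int.self_le_toNat M0) h2
    exact hM0 _ hMi m
  have heL : ∀ i, L ≤ i → e i = 0 := by
    intro i hi
    have h2 : ¬ i ≤ k := by omega
    simp [he, hcc, hYz i hi, h2]
  -- Step 1: combine the twisted Jacobi identity with the hypothesis.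
  have main : ∀ (t : ℤ) (u0 : ℚ) (q : Fin r → ℤ) (w : W),
      ∑ i ∈ Finset.range L, binomC ((s:ℚ)/(N:ℚ) + (t:ℚ)) i •
        M.Yw (e i) (u0 - i) (q + m) w = 0 := by
    intro t u0 q w
    set m0 : ℚ := (s:ℚ)/(N:ℚ) + (t:ℚ) with hm0
    set n0 : ℚ := u0 - m0 with hn0
    have hu0 : ∀ i : ℕ, m0 + n0 - i = u0 - i := by intro i; rw [hn0]; ring
    have hcond : ∃ t' : ℤ, m0 = (s:ℚ)/(N:ℚ) + (t':ℚ) := ⟨t, hm0⟩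
    have hjac := M.jacobi a s hs ha b w m0 n0 0 m (q+m)
    rw [if_pos hcond] at hjac
    rw [finsum_eq_single _ 0 (fun i hi => by
      simp [binomC_zero_left i hi])] at hjac
    norm_num [binomC_zero_right] at hjac
    have hcw := LinearMap.congr_fun (hyp m0 n0 q) w
    rw [if_pos hcond] at hcw
    simp only [LinearMap.sub_apply, Module.End.mul_apply, LinearMap.sum_apply,
      LinearMap.smul_apply] at hcw
    have heq : (∑ᶠ i : ℕ, binomC m0 i • M.Yw (T.Y a (i:ℤ) m b) (m0+n0-i) (q+m) w)
        = ∑ j ∈ Finset.range (k+1), binomC m0 j • M.Yw (c j) (m0+n0-j) (q+m) w := by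
      rw [← hjac]
      exact hcw
    have hfin : (∑ᶠ i : ℕ, binomC m0 i • M.Yw (T.Y a (i:ℤ) m b) (m0+n0-i) (q+m) w)
        = ∑ i ∈ Finset.range L, binomC m0 i • M.Yw (T.Y a (i:ℤ) m b) (u0-i) (q+m) w := by
      rw [finsum_eq_finset_sum_of_support_subset]
      · apply Finset.sum_congr rfl
        intro i _
        rw [hu0]
      · intro i hi
        simp only [Function.mem_support, ne_eq] at hi
        rw [Finset.coe_range, Set.mem_Iio]
        by_contra hiL
        push_neg at hiL
        apply hi
        rw [hYz i hiL]
        simp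
    have hext : ∑ i ∈ Finset.range L, binomC m0 i • M.Yw (cc i) (u0-i) (q+m) w
        = ∑ j ∈ Finset.range (k+1), binomC m0 j • M.Yw (c j) (m0+n0-j) (q+m) w := by
      rw [← Finset.sum_subset (Finset.range_subset_range.2 hkL) (fun i _ hik => by
        have hki : k < i := by
          rcases Nat.lt_or_ge k i with h|h
          · exact h
          · exact absurd (Finset.mem_range.2 (Nat.lt_succ_of_le h)) hik
        rw [hccz i hki]
        simp)]
      apply Finset.sum_congr rfl
      intro j hj
      have hjk : j ≤ k := Nat.lt_succ_iff.1 (Finset.mem_range.1 hj)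
      rw [hu0]
      simp [hcc, hjk]
    have hsum : ∑ i ∈ Finset.range L, binomC m0 i • M.Yw (T.Y a (i:ℤ) m b) (u0-i) (q+m) w
        = ∑ i ∈ Finset.range L, binomC m0 i • M.Yw (cc i) (u0-i) (q+m) w := by
      rw [← hfin, heq, ← hext]
    have hterm : ∀ i ∈ Finset.range L, binomC m0 i • M.Yw (e i) (u0-i) (q+m) w
        = binomC m0 i • M.Yw (T.Y a (i:ℤ) m b) (u0-i) (q+m) w
          - binomC m0 i • M.Yw (cc i) (u0-i) (q+m) w := by
      intro i _
      rw [he]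
      simp [map_sub, smul_sub]
    rw [Finset.sum_congr rfl hterm, Finset.sum_sub_distrib, hsum, sub_self]
  -- Step 2: all the vectors e i vanish.
  have hzero : ∀ i, e i = 0 := by
    intro i
    by_cases hiL : i < L
    · apply hfaithful
      intro m0' m'
      ext w
      have hk := key_vanish ((s:ℚ)/(N:ℚ)) L
        (fun j => M.Yw (e j) ((m0' + i) - j) (m' - m + m) w)
        (fun t => main t (m0' + i) (m' - m) w) i hiL
      simpa using hk
    · exact heL i (le_of_not_gt hiL)
  have hYab : ∀ i : ℕ, T.Y a (i:ℤ) m b = cc i := by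
    intro i
    have h := hzero i
    rw [he] at h
    exact sub_eq_zero.1 h
  refine ⟨?_, ?_, ?_⟩
  · intro j hj
    rw [hYab j]
    simp [hcc, hj]
  · intro j hj
    rw [hYab j, hccz j hj]
  -- Step 3: the untwisted commutator formula.
  · intro m0 n0 q
    ext w
    have hjac := T.jacobi a b w m0 n0 0 m (q+m)
    rw [finsum_eq_single _ 0 (fun i hi => by
      simp [binomC_zero_left i hi])] at hjac
    norm_num [binomC_zero_right] at hjac
    have hR : (∑ᶠ i : ℕ, binomC ((m0:ℤ):ℚ) i • T.Y (T.Y a (i:ℤ) m b) (m0+n0-i) (q+m) w)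
        = ∑ j ∈ Finset.range (k+1), binomC ((m0:ℤ):ℚ) j • T.Y (c j) (m0+n0-j) (q+m) w := by
      rw [finsum_eq_finset_sum_of_support_subset _ (s := Finset.range (k+1)) (fun i hi => by
        simp only [Function.mem_support, ne_eq] at hi
        rw [Finset.coe_range, Set.mem_Iio]
        by_contra hik
        push_neg at hik
        apply hi
        rw [hYab i, hccz i hik]
        simp)]
      apply Finset.sum_congr rfl
      intro j hj
      have hjk : j ≤ k := Nat.lt_succ_iff.1 (Finset.mem_range.1 hj)
      rw [hYab j]
      simp [hcc, hjk]
    rw [hR] at hjac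
    simpa only [LinearMap.sub_apply, Module.End.mul_apply, LinearMap.sum_apply,
      LinearMap.smul_apply] using hjac


end
end

section
/- For a ∈ 𝔤_{k_0,k}, b ∈ 𝔤_{l_0,l} ((k_0,k),(l_0,l) ∈ ℤ×ℤ^r), and m ∈ k+Λ(N) ⊂ ℤ^r, the following identity of formal series with coefficients in the universal enveloping algebra of the Lie algebra τ holds: [a^τ(x_0,m), b^τ(y_0,y)] = y^m [a,b]^τ(y_0,y)·x_0^{−1}δ(y_0/x_0)(y_0/x_0)^{k_0/N_0} + y^m ⟨a,b⟩𝔠·(∂/∂y_0)(x_0^{−1}δ(y_0/x_0)(y_0/x_0)^{k_0/N_0}); moreover, for m ∉ k+Λ(N) one has [a^τ(x_0,m), b^τ(y_0,y)] = 0. -/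
open scoped BigOperators

attribute [local instance] Classical.propDecidable

noncomputable section

section Lie

variable {r : ℕ}
variable {𝔤 : Type} [LieRing 𝔤] [LieAlgebra ℂ 𝔤]

/-- `a ∈ 𝔤_k` for the commuting family `σp` of automorphisms (of orders
`Np`): `σp j (a) = ω_{Np j}^{k j}·a` for all `j`. -/
def HomogPlus (σp : Fin r → Module.End ℂ 𝔤) (Np : Fin r → ℕ)
    (a : 𝔤) (k : Fin r → ℤ) : Prop :=
  ∀ j : Fin r, σp j a = (rtu (Np j)) ^ (k j) • a

/-- `a ∈ 𝔤_{k₀,k}` for the commuting family `σf 0, …, σf r` of automorphisms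
(of orders `Nf 0, …, Nf r`). -/
def HomogFull (σf : Fin (r + 1) → Module.End ℂ 𝔤) (Nf : Fin (r + 1) → ℕ)
    (a : 𝔤) (k0 : ℤ) (k : Fin r → ℤ) : Prop :=
  σf 0 a = (rtu (Nf 0)) ^ k0 • a ∧
  ∀ j : Fin r, σf j.succ a = (rtu (Nf j.succ)) ^ (k j) • a

/-- `m ∈ k + Λ(N)` where `Λ(N) = ℤN₁×⋯×ℤN_r ⊆ ℤ^r`. -/
def InLambda (Np : Fin r → ℕ) (k m : Fin r → ℤ) : Prop :=
  ∀ j : Fin r, ((Np j : ℤ)) ∣ (m j - k j)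

/-- The underlying space of the centrally extended loop algebra
`L̂_{r+1}(𝔤,N₀) = (𝔤 ⊗ ℂ[t₀^{±1/N₀}, t₁^{±1},…,t_r^{±1}]) ⊕ ℂ𝔠`
(allowing all rational `t₀`-exponents): a finitely supported family of
coefficients in `𝔤`, together with a central coordinate. -/
abbrev LoopHat (r : ℕ) (𝔤 : Type) [LieRing 𝔤] [LieAlgebra ℂ 𝔤] :=
  ((ℚ × (Fin r → ℤ)) →₀ 𝔤) × ℂ

/-- The element `a ⊗ t₀^{p} t^m` of `L̂_{r+1}(𝔤,N₀)`. -/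
def lelt (p : ℚ) (m : Fin r → ℤ) (a : 𝔤) : LoopHat r 𝔤 :=
  (Finsupp.single (p, m) a, 0)

/-- The central element `𝔠`. -/
def lcc : LoopHat r 𝔤 := (0, 1)

/-- The Lie bracket of `L̂_{r+1}(𝔤,N₀)`:
`[a⊗t₀^{p}t^m, b⊗t₀^{p'}t^n] = [a,b]⊗t₀^{p+p'}t^{m+n}
  + p·⟨a,b⟩·δ_{p+p',0}·δ_{m+n,0}·𝔠`, with `𝔠` central. -/
def lbr (Φ : 𝔤 →ₗ[ℂ] 𝔤 →ₗ[ℂ] ℂ) (x y : LoopHat r 𝔤) : LoopHat r 𝔤 :=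
  (x.1.sum fun pm a => y.1.sum fun qn b =>
      Finsupp.single (pm.1 + qn.1, pm.2 + qn.2) ⁅a, b⁆,
   x.1.sum fun pm a => y.1.sum fun qn b =>
      if pm.1 + qn.1 = 0 ∧ pm.2 + qn.2 = 0 then (pm.1 : ℂ) * Φ a b else 0)

/-- The coefficient of `x₀^{-μ-1} x^{-m}` in the formal series
`a^τ(x₀,x) = ∑_{m₀ ∈ ℤ, m ∈ k+Λ(N)} (a ⊗ t₀^{k₀/N₀+m₀} t^m)
  x₀^{-k₀/N₀-m₀-1} x^{-m}` attached to `a ∈ 𝔤_{k₀,k}`. -/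
def tauCoef (N0 : ℕ) (Np : Fin r → ℕ) (k0 : ℤ) (k : Fin r → ℤ)
    (a : 𝔤) (μ : ℚ) (m : Fin r → ℤ) : LoopHat r 𝔤 :=
  if (∃ t : ℤ, μ = (k0 : ℚ) / (N0 : ℚ) + (t : ℚ)) ∧ InLambda Np k m then
    lelt μ m a
  else 0

/-- A restricted module of level `ℓ` for the twisted toroidal Lie algebra
`τ = (L̂_{r+1}(𝔤,N₀))^{Ĝ}`, encoded through the action operators
`act a μ m` of the elements `a ⊗ t₀^{μ} t^m` (`a` homogeneous,
`μ ∈ k₀/N₀ + ℤ`, `m ∈ k + Λ(N)`): linearity in `a`, support, the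
commutation relations of `τ` (with `𝔠` acting as `ℓ`), and the
restrictedness condition. -/
structure TauModStr (r : ℕ) (𝔤 : Type) [LieRing 𝔤] [LieAlgebra ℂ 𝔤]
    (σf : Fin (r + 1) → Module.End ℂ 𝔤) (Nf : Fin (r + 1) → ℕ)
    (Φ : 𝔤 →ₗ[ℂ] 𝔤 →ₗ[ℂ] ℂ) (ℓ : ℂ)
    (W : Type) [AddCommGroup W] [Module ℂ W] : Type where
  act : 𝔤 →ₗ[ℂ] (ℚ → (Fin r → ℤ) → Module.End ℂ W)
  supp : ∀ (a : 𝔤) (k0 : ℤ) (k : Fin r → ℤ),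
    HomogFull σf Nf a k0 k →
    ∀ (μ : ℚ) (m : Fin r → ℤ),
      (¬ (∃ t : ℤ, μ = (k0 : ℚ) / (Nf 0 : ℚ) + (t : ℚ)) ∨
        ¬ InLambda (fun j => Nf j.succ) k m) →
      act a μ m = 0
  brackets : ∀ (a b : 𝔤) (k0 l0 : ℤ) (k l : Fin r → ℤ),
    HomogFull σf Nf a k0 k → HomogFull σf Nf b l0 l →
    ∀ (μ ν : ℚ) (m n : Fin r → ℤ),
      (∃ t : ℤ, μ = (k0 : ℚ) / (Nf 0 : ℚ) + (t : ℚ)) →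
      InLambda (fun j => Nf j.succ) k m →
      (∃ t : ℤ, ν = (l0 : ℚ) / (Nf 0 : ℚ) + (t : ℚ)) →
      InLambda (fun j => Nf j.succ) l n →
      act a μ m * act b ν n - act b ν n * act a μ m
        = act ⁅a, b⁆ (μ + ν) (m + n)
          + (if μ + ν = 0 ∧ m + n = 0 then ((μ : ℂ) * Φ a b * ℓ) else 0) •
              (1 : Module.End ℂ W)
  restr : ∀ (a : 𝔤) (w : W), ∃ M : ℚ, ∀ μ : ℚ, M ≤ μ → ∀ m : Fin r → ℤ,
    act a μ m w = 0

/-- A restricted module of level `ℓ` for the (untwisted, `Ĝ₊`-fixed-point)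
toroidal Lie algebra `L = (L̂_{r+1}(𝔤))^{Ĝ₊}`, encoded through the action
operators `act a μ m` of `a ⊗ t₀^{μ} t^m` (`μ ∈ ℤ`, `a` homogeneous for
`σ₁,…,σ_r`, `m ∈ k + Λ(N)`). -/
structure LModStr (r : ℕ) (𝔤 : Type) [LieRing 𝔤] [LieAlgebra ℂ 𝔤]
    (σp : Fin r → Module.End ℂ 𝔤) (Np : Fin r → ℕ)
    (Φ : 𝔤 →ₗ[ℂ] 𝔤 →ₗ[ℂ] ℂ) (ℓ : ℂ)
    (M : Type) [AddCommGroup M] [Module ℂ M] : Type where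
  act : 𝔤 →ₗ[ℂ] (ℤ → (Fin r → ℤ) → Module.End ℂ M)
  supp : ∀ (a : 𝔤) (k : Fin r → ℤ),
    HomogPlus σp Np a k →
    ∀ (μ : ℤ) (m : Fin r → ℤ), ¬ InLambda Np k m → act a μ m = 0
  brackets : ∀ (a b : 𝔤) (k l : Fin r → ℤ),
    HomogPlus σp Np a k → HomogPlus σp Np b l →
    ∀ (μ ν : ℤ) (m n : Fin r → ℤ),
      InLambda Np k m → InLambda Np l n →
      act a μ m * act b ν n - act b ν n * act a μ m
        = act ⁅a, b⁆ (μ + ν) (m + n)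
          + (if μ + ν = 0 ∧ m + n = 0 then ((μ : ℂ) * Φ a b * ℓ) else 0) •
              (1 : Module.End ℂ M)

end Lie


section

variable {r : ℕ}


variable {𝔤 : Type} [LieRing 𝔤] [LieAlgebra ℂ 𝔤]

lemma lbr_zero_left (Φ : 𝔤 →ₗ[ℂ] 𝔤 →ₗ[ℂ] ℂ) (x : LoopHat r 𝔤) : lbr Φ 0 x = 0 := by
  simp [lbr]

lemma lbr_zero_right (Φ : 𝔤 →ₗ[ℂ] 𝔤 →ₗ[ℂ] ℂ) (x : LoopHat r 𝔤) : lbr Φ x 0 = 0 := by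
  simp [lbr]

lemma lbr_single (Φ : 𝔤 →ₗ[ℂ] 𝔤 →ₗ[ℂ] ℂ) (p q : ℚ) (m n : Fin r → ℤ) (a b : 𝔤) :
    lbr Φ (lelt p m a) (lelt q n b)
      = (Finsupp.single (p + q, m + n) ⁅a, b⁆,
         if p + q = 0 ∧ m + n = 0 then (p : ℂ) * Φ a b else 0) := by
  unfold lbr lelt
  simp [Finsupp.sum_single_index]

/-- For `a ∈ 𝔤_{k₀,k}`, `b ∈ 𝔤_{l₀,l}` and
`m ∈ k + Λ(N)`, the identity
`[a^τ(x₀,m), b^τ(y₀,y)]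
  = y^m [a,b]^τ(y₀,y)·x₀^{-1}δ(y₀/x₀)(y₀/x₀)^{k₀/N₀}
    + y^m ⟨a,b⟩𝔠·(∂/∂y₀)(x₀^{-1}δ(y₀/x₀)(y₀/x₀)^{k₀/N₀})`
of formal series with coefficients in `τ ⊆ L̂_{r+1}(𝔤,N₀)` holds, written
out in coefficients: extracting the coefficient of
`x₀^{-μ-1} y₀^{-ν-1} y^{-q}` gives the identity below.  Moreover, for
`m ∉ k + Λ(N)` the commutator `[a^τ(x₀,m), b^τ(y₀,y)]` vanishes. -/
theorem twisted_toroidal_commutator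
    (hr : 0 < r)
    (𝔤 : Type) [LieRing 𝔤] [LieAlgebra ℂ 𝔤]
    [Module.Finite ℂ 𝔤] [LieAlgebra.IsSimple ℂ 𝔤]
    (σf : Fin (r + 1) → Module.End ℂ 𝔤)
    (hlie : ∀ (i : Fin (r + 1)) (x y : 𝔤), σf i ⁅x, y⁆ = ⁅σf i x, σf i y⁆)
    (hcomm : ∀ i j : Fin (r + 1), σf i * σf j = σf j * σf i)
    (Nf : Fin (r + 1) → ℕ) (hNf : ∀ i, 0 < Nf i)
    (horder : ∀ i, orderOf (σf i) = Nf i)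
    (Φ : 𝔤 →ₗ[ℂ] 𝔤 →ₗ[ℂ] ℂ)
    (hsymm : ∀ x y : 𝔤, Φ x y = Φ y x)
    (hinvar : ∀ x y z : 𝔤, Φ ⁅x, y⁆ z = Φ x ⁅y, z⁆)
    (hform : ∀ (i : Fin (r + 1)) (x y : 𝔤), Φ (σf i x) (σf i y) = Φ x y)
    (a b : 𝔤) (k0 l0 : ℤ) (k l : Fin r → ℤ)
    (ha : HomogFull σf Nf a k0 k) (hb : HomogFull σf Nf b l0 l)
    (m : Fin r → ℤ) :
    (InLambda (fun j => Nf j.succ) k m →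
      ∀ (μ ν : ℚ) (q : Fin r → ℤ),
        lbr Φ (tauCoef (Nf 0) (fun j => Nf j.succ) k0 k a μ m)
              (tauCoef (Nf 0) (fun j => Nf j.succ) l0 l b ν q)
          = (if ∃ t : ℤ, μ = (k0 : ℚ) / (Nf 0 : ℚ) + (t : ℚ) then
              tauCoef (Nf 0) (fun j => Nf j.succ) (k0 + l0) (k + l)
                ⁅a, b⁆ (μ + ν) (q + m)
            else 0)
            + (if (∃ t : ℤ, μ = (k0 : ℚ) / (Nf 0 : ℚ) + (t : ℚ)) ∧
                  ν = -μ ∧ q = -m then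
                ((μ : ℂ) * Φ a b) • (lcc : LoopHat r 𝔤)
              else 0)) ∧
    (¬ InLambda (fun j => Nf j.succ) k m →
      ∀ (μ ν : ℚ) (q : Fin r → ℤ),
        lbr Φ (tauCoef (Nf 0) (fun j => Nf j.succ) k0 k a μ m)
              (tauCoef (Nf 0) (fun j => Nf j.succ) l0 l b ν q) = 0) := by
  classical
  have hN0 : ((Nf 0 : ℚ)) ≠ 0 := Nat.cast_ne_zero.2 (hNf 0).ne'
  have hsplit : (((k0 + l0 : ℤ)) : ℚ) / (Nf 0 : ℚ)
      = (k0 : ℚ) / (Nf 0 : ℚ) + (l0 : ℚ) / (Nf 0 : ℚ) := by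
    push_cast; ring
  have hprim : ∀ i : Fin (r + 1), IsPrimitiveRoot (rtu (Nf i)) (Nf i) := fun i =>
    Complex.isPrimitiveRoot_exp _ (hNf i).ne'
  have hrne : ∀ i : Fin (r + 1), rtu (Nf i) ≠ 0 := fun i => Complex.exp_ne_zero _
  have hdvd : Φ a b ≠ 0 →
      ((Nf 0 : ℤ) ∣ (k0 + l0) ∧ ∀ j : Fin r, ((Nf j.succ : ℤ)) ∣ (k j + l j)) := by
    intro hne
    have key : ∀ (i : Fin (r + 1)) (e1 e2 : ℤ), σf i a = rtu (Nf i) ^ e1 • a →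
        σf i b = rtu (Nf i) ^ e2 • b → (Nf i : ℤ) ∣ e1 + e2 := by
      intro i e1 e2 h1 h2
      have h := hform i a b
      rw [h1, h2, map_smul, map_smul, LinearMap.smul_apply, smul_smul, smul_eq_mul,
        ← zpow_add₀ (hrne i)] at h
      have hone : rtu (Nf i) ^ (e2 + e1) = 1 :=
        mul_right_cancel₀ hne (by rw [one_mul]; exact h)
      have := ((hprim i).zpow_eq_one_iff_dvd _).mp hone
      rwa [add_comm] at this
    exact ⟨key 0 k0 l0 ha.1 hb.1, fun j => key j.succ (k j) (l j) (ha.2 j) (hb.2 j)⟩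
  constructor
  · intro hin μ ν q
    by_cases hμ : ∃ t : ℤ, μ = (k0 : ℚ) / (Nf 0 : ℚ) + (t : ℚ)
    · have hA : tauCoef (Nf 0) (fun j => Nf j.succ) k0 k a μ m = lelt μ m a := by
        unfold tauCoef; rw [if_pos ⟨hμ, hin⟩]
      by_cases hν : (∃ s : ℤ, ν = (l0 : ℚ) / (Nf 0 : ℚ) + (s : ℚ)) ∧
          InLambda (fun j => Nf j.succ) l q
      · have hB : tauCoef (Nf 0) (fun j => Nf j.succ) l0 l b ν q = lelt ν q b := by
          unfold tauCoef; rw [if_pos hν]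
        obtain ⟨t, ht⟩ := hμ
        obtain ⟨⟨s, hs⟩, hql⟩ := hν
        have hμ' : ∃ t : ℤ, μ = (k0 : ℚ) / (Nf 0 : ℚ) + (t : ℚ) := ⟨t, ht⟩
        have hcond : (∃ u : ℤ, μ + ν = (((k0 + l0 : ℤ)) : ℚ) / (Nf 0 : ℚ) + (u : ℚ)) ∧
            InLambda (fun j => Nf j.succ) (k + l) (q + m) := by
          refine ⟨⟨t + s, by rw [hsplit, ht, hs]; push_cast; ring⟩, fun j => ?_⟩
          have h1 := hin j
          have h2 := hql j
          have heq : (q + m) j - (k + l) j = (q j - l j) + (m j - k j) := by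
            simp only [Pi.add_apply]; ring
          rw [heq]; exact dvd_add h2 h1
        rw [hA, hB, lbr_single, if_pos hμ']
        unfold tauCoef
        rw [if_pos hcond]
        have hmq : m + q = q + m := add_comm m q
        by_cases hc : ν = -μ ∧ q = -m
        · obtain ⟨hc1, hc2⟩ := hc
          have h0 : μ + ν = 0 := by rw [hc1]; ring
          have h0' : m + q = 0 := by rw [hc2]; abel
          have hcnd1 : μ + ν = 0 ∧ m + q = 0 := ⟨h0, h0'⟩
          have hcnd2 : (∃ t : ℤ, μ = (k0 : ℚ) / (Nf 0 : ℚ) + (t : ℚ)) ∧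
              ν = -μ ∧ q = -m := ⟨hμ', hc1, hc2⟩
          rw [if_pos hcnd1, if_pos hcnd2]
          unfold lelt lcc
          rw [hmq]
          ext pm <;> simp
        · have h0 : ¬ (μ + ν = 0 ∧ m + q = 0) := by
            rintro ⟨h1, h2⟩
            refine hc ⟨by linarith, ?_⟩
            have := congrArg (fun z => z - m) h2
            simpa [sub_eq_add_neg, add_comm] using this
          have h0' : ¬ ((∃ t : ℤ, μ = (k0 : ℚ) / (Nf 0 : ℚ) + (t : ℚ)) ∧
              ν = -μ ∧ q = -m) := fun h => hc h.2
          rw [if_neg h0, if_neg h0']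
          unfold lelt
          rw [hmq]
          ext pm <;> simp
      · have hB0 : tauCoef (Nf 0) (fun j => Nf j.succ) l0 l b ν q = 0 := by
          unfold tauCoef; rw [if_neg hν]
        rw [hA, hB0, lbr_zero_right]
        have hJ : tauCoef (Nf 0) (fun j => Nf j.succ) (k0 + l0) (k + l)
            ⁅a, b⁆ (μ + ν) (q + m) = 0 := by
          unfold tauCoef
          rw [if_neg]
          rintro ⟨⟨u, hu⟩, hLam⟩
          obtain ⟨t, ht⟩ := hμ
          refine hν ⟨⟨u - t, ?_⟩, fun j => ?_⟩
          · rw [hsplit] at hu; push_cast at hu ⊢; linarith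
          · have h1 := hLam j
            have h2 := hin j
            have heq : q j - l j = ((q + m) j - (k + l) j) - (m j - k j) := by
              simp only [Pi.add_apply]; ring
            rw [heq]; exact dvd_sub h1 h2
        rw [if_pos hμ, hJ]
        by_cases hc : ν = -μ ∧ q = -m
        · have hcnd2 : (∃ t : ℤ, μ = (k0 : ℚ) / (Nf 0 : ℚ) + (t : ℚ)) ∧
              ν = -μ ∧ q = -m := ⟨hμ, hc⟩
          rw [if_pos hcnd2]
          obtain ⟨hc1, hc2⟩ := hc
          suffices hPhi : Φ a b = 0 by simp [hPhi]
          by_contra hPhi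
          obtain ⟨hd0, hdj⟩ := hdvd hPhi
          obtain ⟨t, ht⟩ := hμ
          refine hν ⟨?_, fun j => ?_⟩
          · obtain ⟨c, hcc⟩ := hd0
            refine ⟨-c - t, ?_⟩
            have hcq : (((k0 + l0 : ℤ)) : ℚ) / (Nf 0 : ℚ) = (c : ℚ) := by
              rw [hcc]; push_cast; field_simp
            rw [hsplit] at hcq
            rw [hc1, ht]; push_cast; linarith
          · have h2 := hin j
            have h3 := hdj j
            have hqj : q j = -(m j) := by rw [hc2]; simp
            have heq : q j - l j = -((m j - k j) + (k j + l j)) := by rw [hqj]; ring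
            rw [heq]
            exact dvd_neg.2 (dvd_add h2 h3)
        · have h0' : ¬ ((∃ t : ℤ, μ = (k0 : ℚ) / (Nf 0 : ℚ) + (t : ℚ)) ∧
              ν = -μ ∧ q = -m) := fun h => hc h.2
          rw [if_neg h0']
          simp
    · have hA0 : tauCoef (Nf 0) (fun j => Nf j.succ) k0 k a μ m = 0 := by
        unfold tauCoef; rw [if_neg (fun h => hμ h.1)]
      have h0' : ¬ ((∃ t : ℤ, μ = (k0 : ℚ) / (Nf 0 : ℚ) + (t : ℚ)) ∧
          ν = -μ ∧ q = -m) := fun h => hμ h.1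
      rw [hA0, lbr_zero_left, if_neg hμ, if_neg h0']
      simp
  · intro hnin μ ν q
    have hA0 : tauCoef (Nf 0) (fun j => Nf j.succ) k0 k a μ m = 0 := by
      unfold tauCoef; rw [if_neg (fun h => hnin h.2)]
    rw [hA0, lbr_zero_left]

end

end
end
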